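/- arXiv:1603.02752 — 2 statements merged into one kernel-verified Lean document; each statement's English description precedes it below -/
import Mathlib

section
/- Fix an integer k ≥ 2, μ ∈ [0,1], and w₀ ∈ ℝ, and define w : {0,1}^{k−1} → ℝ by w(t) = (−1)^{H(t)} · w₀ + (−1)^{H(t)−1} · Φ(H(t)). Then 0 ≤ w(t) ≤ ψ(H(t)) holds for every t ∈ {0,1}^{k−1} if and only if max{Φ(p) : 0 ≤ p ≤ k, p even} ≤ w₀ ≤ min{Φ(p) : 1 ≤ p ≤ k, p odd}. -/
/-- `ψ(i) = μ^i (1−μ)^{k−1−i}`. -/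
noncomputable def psiFn (k : ℕ) (μ : ℝ) (i : ℕ) : ℝ := μ ^ i * (1 - μ) ^ (k - 1 - i)

/-- `Φ(p) = Σ_{i=0}^{p−1} (−1)^i ψ(i)`, so `Φ(0) = 0`. -/
noncomputable def PhiFn (k : ℕ) (μ : ℝ) (p : ℕ) : ℝ :=
  ∑ i ∈ Finset.range p, (-1 : ℝ) ^ i * psiFn k μ i

/-- Hamming weight of a binary string. -/
def hamW {m : ℕ} (t : Fin m → Bool) : ℕ := (Finset.univ.filter fun i => t i = true).card

lemma phi_succ (k : ℕ) (μ : ℝ) (p : ℕ) :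
    PhiFn k μ (p + 1) = PhiFn k μ p + (-1 : ℝ) ^ p * psiFn k μ p := by
  simp [PhiFn, Finset.sum_range_succ]

lemma psi_even_eq {k p : ℕ} (μ : ℝ) (hp : Even p) :
    psiFn k μ p = PhiFn k μ (p + 1) - PhiFn k μ p := by
  rw [phi_succ, hp.neg_one_pow]; ring

lemma psi_odd_eq {k p : ℕ} (μ : ℝ) (hp : Odd p) :
    psiFn k μ p = PhiFn k μ p - PhiFn k μ (p + 1) := by
  rw [phi_succ, hp.neg_one_pow]; ring

lemma W_even (k : ℕ) (μ : ℝ) (w₀ : ℝ) {p : ℕ} (hp : Even p) :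
    (-1 : ℝ) ^ p * w₀ + (-1 : ℝ) ^ (p - 1) * PhiFn k μ p = w₀ - PhiFn k μ p := by
  rcases Nat.eq_zero_or_pos p with h | h
  · subst h; simp [PhiFn]
  · have h1 : Odd (p - 1) := Nat.Even.sub_odd h hp odd_one
    rw [hp.neg_one_pow, h1.neg_one_pow]; ring

lemma W_odd (k : ℕ) (μ : ℝ) (w₀ : ℝ) {p : ℕ} (hp : Odd p) :
    (-1 : ℝ) ^ p * w₀ + (-1 : ℝ) ^ (p - 1) * PhiFn k μ p = PhiFn k μ p - w₀ := by
  have h1 : Even (p - 1) := Nat.Odd.sub_odd hp odd_one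
  rw [hp.neg_one_pow, h1.neg_one_pow]; ring

lemma exists_hamW (m p : ℕ) (hp : p ≤ m) : ∃ t : Fin m → Bool, hamW t = p := by
  refine ⟨fun i => decide (i.val < p), ?_⟩
  unfold hamW
  simp only [decide_eq_true_eq]
  rcases eq_or_lt_of_le hp with h | h
  · subst h
    simp [Finset.filter_true_of_mem, Fin.is_lt]
  · have : (Finset.univ.filter fun i : Fin m => i.val < p) = Finset.Iio (⟨p, h⟩ : Fin m) := by
      ext i; simp [Fin.lt_def]
    rw [this, Fin.card_Iio]

lemma hamW_le {m : ℕ} (t : Fin m → Bool) : hamW t ≤ m := by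
  calc hamW t ≤ (Finset.univ : Finset (Fin m)).card := Finset.card_filter_le _ _
  _ = m := by simp

/-- Fix `k = n + 2 ≥ 2`, `μ ∈ [0,1]` and `w₀ ∈ ℝ`, and define
`w(t) = (−1)^{H(t)} w₀ + (−1)^{H(t)−1} Φ(H(t))` on `{0,1}^{k−1}`.  Then
`0 ≤ w(t) ≤ ψ(H(t))` for all `t` if and only if
`max{Φ(p) : 0 ≤ p ≤ k even} ≤ w₀ ≤ min{Φ(p) : 1 ≤ p ≤ k odd}`. -/
theorem stmt_5 (n : ℕ) (μ : ℝ) (hμ : μ ∈ Set.Icc (0 : ℝ) 1) (w₀ : ℝ) :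
    (∀ t : Fin (n + 1) → Bool,
        0 ≤ (-1 : ℝ) ^ hamW t * w₀ + (-1 : ℝ) ^ (hamW t - 1) * PhiFn (n + 2) μ (hamW t) ∧
        (-1 : ℝ) ^ hamW t * w₀ + (-1 : ℝ) ^ (hamW t - 1) * PhiFn (n + 2) μ (hamW t)
          ≤ psiFn (n + 2) μ (hamW t))
    ↔ ((∀ p, p ≤ n + 2 → Even p → PhiFn (n + 2) μ p ≤ w₀) ∧
        ∀ p, 1 ≤ p → p ≤ n + 2 → Odd p → w₀ ≤ PhiFn (n + 2) μ p) := by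
  have key : (∀ t : Fin (n + 1) → Bool,
        0 ≤ (-1 : ℝ) ^ hamW t * w₀ + (-1 : ℝ) ^ (hamW t - 1) * PhiFn (n + 2) μ (hamW t) ∧
        (-1 : ℝ) ^ hamW t * w₀ + (-1 : ℝ) ^ (hamW t - 1) * PhiFn (n + 2) μ (hamW t)
          ≤ psiFn (n + 2) μ (hamW t))
      ↔ (∀ p, p ≤ n + 1 →
        0 ≤ (-1 : ℝ) ^ p * w₀ + (-1 : ℝ) ^ (p - 1) * PhiFn (n + 2) μ p ∧
        (-1 : ℝ) ^ p * w₀ + (-1 : ℝ) ^ (p - 1) * PhiFn (n + 2) μ p ≤ psiFn (n + 2) μ p) := by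
    constructor
    · intro h p hp
      obtain ⟨t, ht⟩ := exists_hamW (n + 1) p hp
      simpa [ht] using h t
    · intro h t
      exact h (hamW t) (hamW_le t)
  rw [key]
  constructor
  · intro h
    constructor
    · intro p hp hpe
      rcases Nat.lt_or_ge p (n + 2) with hlt | hge
      · have := (h p (by omega)).1
        rw [W_even _ _ _ hpe] at this
        linarith
      · -- p = n + 2, use q = n + 1 which is odd
        have hpeq : p = n + 2 := le_antisymm hp hge
        have hq : Odd (n + 1) := by
          rcases Nat.even_or_odd (n + 1) with he | ho
          · exfalso
            have : Odd (n + 2) := Even.add_one he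
            rw [hpeq] at hpe
            exact (Nat.not_even_iff_odd.mpr this) hpe
          · exact ho
        have := (h (n + 1) le_rfl).2
        rw [W_odd _ _ _ hq, psi_odd_eq _ hq] at this
        rw [hpeq]
        linarith
    · intro p hp1 hp hpo
      rcases Nat.lt_or_ge p (n + 2) with hlt | hge
      · have := (h p (by omega)).1
        rw [W_odd _ _ _ hpo] at this
        linarith
      · have hpeq : p = n + 2 := le_antisymm hp hge
        have hq : Even (n + 1) := by
          rcases Nat.even_or_odd (n + 1) with he | ho
          · exact he
          · exfalso
            have : Even (n + 2) := Odd.add_one ho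
            rw [hpeq] at hpo
            exact (Nat.not_odd_iff_even.mpr this) hpo
        have := (h (n + 1) le_rfl).2
        rw [W_even _ _ _ hq, psi_even_eq _ hq] at this
        rw [hpeq]
        linarith
  · rintro ⟨he, ho⟩ p hp
    rcases Nat.even_or_odd p with hpe | hpo
    · rw [W_even _ _ _ hpe, psi_even_eq _ hpe]
      have h1 : PhiFn (n + 2) μ p ≤ w₀ := he p (by omega) hpe
      have h2 : w₀ ≤ PhiFn (n + 2) μ (p + 1) :=
        ho (p + 1) (by omega) (by omega) (Even.add_one hpe)
      constructor <;> linarith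
    · rw [W_odd _ _ _ hpo, psi_odd_eq _ hpo]
      have h1 : w₀ ≤ PhiFn (n + 2) μ p := ho p hpo.pos (by omega) hpo
      have h2 : PhiFn (n + 2) μ (p + 1) ≤ w₀ := he (p + 1) (by omega) (Odd.add_one hpo)
      constructor <;> linarith
end

section
/- Let 0 < μ ≤ 1/2 and 0 < p < 1. Then d(μ, μ(1−p)) ≤ p²μ / (2(1−p)(1 − μ(1−p))). Moreover, if 0 < p ≤ 1 and μ(1+p) < 1, then d(μ, μ(1+p)) ≤ p²μ / (2(1 − μ(1+p))). -/
/-!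
Since `klBer x x = 0` and `∂ₜ klBer x t = (t - x) / (t (1 - t))`, we have
`klBer x y = ∫ₓʸ (t - x) / (t (1 - t)) dt`; a lower bound `c` for `t (1 - t)` between `x` and `y`
therefore gives `klBer x y ≤ (y - x)² / (2c)`. Below `μ ≤ 1/2` one may take `c = y (1 - y)` for
`y = μ (1 - p)`, and above `μ` one may take `c = μ (1 - y)` for `y = μ (1 + p)`.
-/

/-- The KL divergence `d(x,y)` between `Bernoulli(x)` and `Bernoulli(y)`. -/
noncomputable def klBer (x y : ℝ) : ℝ :=
  x * Real.log (x / y) + (1 - x) * Real.log ((1 - x) / (1 - y))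

open Set intervalIntegral

theorem klBer_self (x : ℝ) : klBer x x = 0 := by
  simp [klBer]

theorem klBer_one_sub_one_sub (x y : ℝ) : klBer (1 - x) (1 - y) = klBer x y := by
  simp only [klBer, sub_sub_cancel]
  ring

theorem hasDerivAt_klBer {x t : ℝ} (hx₀ : x ≠ 0) (hx₁ : x ≠ 1) (ht₀ : t ≠ 0) (ht₁ : t ≠ 1) :
    HasDerivAt (klBer x) ((t - x) / (t * (1 - t))) t := by
  have hx₁' : 1 - x ≠ 0 := sub_ne_zero.2 hx₁.symm
  have ht₁' : 1 - t ≠ 0 := sub_ne_zero.2 ht₁.symm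
  have h := ((((hasDerivAt_const t x).fun_div (hasDerivAt_id' t) ht₀).log
      (div_ne_zero hx₀ ht₀)).const_mul x).fun_add
    ((((hasDerivAt_const t (1 - x)).fun_div ((hasDerivAt_id' t).const_sub 1) ht₁').log
      (div_ne_zero hx₁' ht₁')).const_mul (1 - x))
  refine h.congr_deriv ?_
  field_simp
  ring

theorem mem_Ioo_of_pos_of_le_mul_one_sub {c t : ℝ} (hc : 0 < c) (ht : c ≤ t * (1 - t)) :
    t ∈ Ioo 0 1 := by
  constructor <;> nlinarith

theorem continuousOn_klBer_deriv (x : ℝ) {s : Set ℝ} (h : s ⊆ Ioo 0 1) :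
    ContinuousOn (fun t => (t - x) / (t * (1 - t))) s :=
  ContinuousOn.div (by fun_prop) (by fun_prop) fun t ht =>
    mul_ne_zero (h ht).1.ne' (sub_ne_zero.2 (h ht).2.ne')

theorem klBer_eq_integral {x y : ℝ} (h : uIcc x y ⊆ Ioo 0 1) :
    klBer x y = ∫ t in x..y, (t - x) / (t * (1 - t)) := by
  have hx := h left_mem_uIcc
  have hderiv : ∀ t ∈ uIcc x y, HasDerivAt (klBer x) ((t - x) / (t * (1 - t))) t := fun t ht =>
    hasDerivAt_klBer hx.1.ne' hx.2.ne (h ht).1.ne' (h ht).2.ne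
  rw [integral_eq_sub_of_hasDerivAt hderiv (continuousOn_klBer_deriv x h).intervalIntegrable,
    klBer_self, sub_zero]

theorem integral_sub_div (x y c : ℝ) : ∫ t in x..y, (t - x) / c = (y - x) ^ 2 / (2 * c) := by
  simp only [integral_div, intervalIntegrable_id, intervalIntegrable_const, integral_sub, integral_id,
    integral_const, smul_eq_mul]
  ring

theorem klBer_le_of_le {x y c : ℝ} (hxy : x ≤ y) (hc : 0 < c)
    (h : ∀ t ∈ Icc x y, c ≤ t * (1 - t)) : klBer x y ≤ (y - x) ^ 2 / (2 * c) := by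
  have hmem : uIcc x y ⊆ Ioo 0 1 := by
    rw [uIcc_of_le hxy]
    exact fun t ht => mem_Ioo_of_pos_of_le_mul_one_sub hc (h t ht)
  rw [klBer_eq_integral hmem, ← integral_sub_div]
  exact integral_mono_on hxy (continuousOn_klBer_deriv x hmem).intervalIntegrable
    ((by fun_prop : Continuous fun t => (t - x) / c).intervalIntegrable x y)
    fun t ht => div_le_div_of_nonneg_left (sub_nonneg.2 ht.1) hc (h t ht)

theorem klBer_le {x y c : ℝ} (hc : 0 < c) (h : ∀ t ∈ uIcc x y, c ≤ t * (1 - t)) :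
    klBer x y ≤ (y - x) ^ 2 / (2 * c) := by
  rcases le_total x y with hxy | hyx
  · exact klBer_le_of_le hxy hc (by rwa [uIcc_of_le hxy] at h)
  · -- `t ↦ 1 - t` reverses the interval and preserves `t * (1 - t)`.
    rw [← klBer_one_sub_one_sub, show (y - x) ^ 2 = ((1 - y) - (1 - x)) ^ 2 by ring]
    refine klBer_le_of_le (by linarith) hc fun t ht => ?_
    have := h (1 - t) (by rw [uIcc_of_ge hyx]; constructor <;> linarith [ht.1, ht.2])
    linarith

theorem klBer_le_sq_div_of_add_le_one {x y : ℝ} (hy : 0 < y) (hyx : y ≤ x) (hxy : x + y ≤ 1) :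
    klBer x y ≤ (x - y) ^ 2 / (2 * (y * (1 - y))) := by
  rw [← neg_sub, neg_sq]
  refine klBer_le (by nlinarith) fun t ht => ?_
  rw [uIcc_of_ge hyx] at ht
  nlinarith [ht.1, ht.2]

theorem klBer_le_sq_div_of_lt_one {x y : ℝ} (hx : 0 < x) (hxy : x ≤ y) (hy : y < 1) :
    klBer x y ≤ (y - x) ^ 2 / (2 * (x * (1 - y))) := by
  refine klBer_le (by nlinarith) fun t ht => ?_
  rw [uIcc_of_le hxy] at ht
  exact mul_le_mul ht.1 (by linarith [ht.2]) (by linarith) (by linarith [ht.1])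

/-- Let `0 < μ ≤ 1/2`.  If `0 < p < 1` then
`d(μ, μ(1−p)) ≤ p²μ / (2(1−p)(1−μ(1−p)))`; moreover if `0 < p ≤ 1` and `μ(1+p) < 1` then
`d(μ, μ(1+p)) ≤ p²μ / (2(1−μ(1+p)))`. -/
theorem stmt_9 (μ p : ℝ) (hμ0 : 0 < μ) (hμ : μ ≤ 1 / 2) :
    (0 < p → p < 1 →
        klBer μ (μ * (1 - p)) ≤ p ^ 2 * μ / (2 * (1 - p) * (1 - μ * (1 - p)))) ∧
      (0 < p → p ≤ 1 → μ * (1 + p) < 1 →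
        klBer μ (μ * (1 + p)) ≤ p ^ 2 * μ / (2 * (1 - μ * (1 + p)))) := by
  refine ⟨fun hp₀ hp₁ => ?_, fun hp₀ _ hlt => ?_⟩
  · have hy : 0 < μ * (1 - p) := mul_pos hμ0 (by linarith)
    calc klBer μ (μ * (1 - p))
        ≤ (μ - μ * (1 - p)) ^ 2 / (2 * (μ * (1 - p) * (1 - μ * (1 - p)))) :=
          klBer_le_sq_div_of_add_le_one hy (by nlinarith) (by nlinarith)
      _ = p ^ 2 * μ / (2 * (1 - p) * (1 - μ * (1 - p))) := by
          field_simp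
          ring
  · calc klBer μ (μ * (1 + p))
        ≤ (μ * (1 + p) - μ) ^ 2 / (2 * (μ * (1 - μ * (1 + p)))) :=
          klBer_le_sq_div_of_lt_one hμ0 (by nlinarith) hlt
      _ = p ^ 2 * μ / (2 * (1 - μ * (1 + p))) := by
          field_simp
          ring
end
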